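/- For a building set B on [n], the weighted quasisymmetric enumerator of the nestohedron P_B coincides with the value of the universal morphism of combinatorial Hopf algebras: F_q(P_B) = Ψ_q([B]). Equivalently, F_q(P_B) = Σ_L q^{rk_B(L)} M_{type(L)}, the sum over all flags L of subsets of [n]. -/

import Mathlib

open scoped Classical Pointwise BigOperators


/-- The dot product pairing on `ℝⁿ`. -/
def dotp {n : ℕ} (ω x : Fin n → ℝ) : ℝ := ∑ i, ω i * x i

/-- The set of points of `Q` on which the linear functional `⟨ω, ·⟩` attains its maximum. -/
def argmaxSet {n : ℕ} (Q : Set (Fin n → ℝ)) (ω : Fin n → ℝ) : Set (Fin n → ℝ) :=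
  {x | x ∈ Q ∧ ∀ y ∈ Q, dotp ω y ≤ dotp ω x}

/-- `G` is a face of `Q` : it is the argmax set of some linear functional. -/
def IsFace {n : ℕ} (Q G : Set (Fin n → ℝ)) : Prop := ∃ ω : Fin n → ℝ, G = argmaxSet Q ω

/-- The dimension of a convex body: the rank of its direction vector space. -/
noncomputable def pdim {n : ℕ} (s : Set (Fin n → ℝ)) : ℕ := Module.finrank ℝ (vectorSpan ℝ s)

/-- `Q` is a (nonempty) convex polytope. -/
def IsPolytope {n : ℕ} (Q : Set (Fin n → ℝ)) : Prop :=
  ∃ V : Finset (Fin n → ℝ), V.Nonempty ∧ Q = convexHull ℝ (V : Set (Fin n → ℝ))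

/-- A flag `∅ ⊂ F₁ ⊂ ⋯ ⊂ F_k ⊂ [n]` of subsets of `[n]`, recorded by its set
`C = {F₁,…,F_k}` of proper nonempty intermediate subsets, which form a chain. -/
def IsFlag (n : ℕ) (C : Finset (Finset (Fin n))) : Prop :=
  (∀ A ∈ C, A.Nonempty ∧ A ≠ Finset.univ) ∧ (∀ A ∈ C, ∀ B ∈ C, A ⊆ B ∨ B ⊆ A)

/-- The level of an element: the number of members of the chain not containing it.  Elements of
`F_i ∖ F_{i-1}` have level `i - 1`-ish: level `0` on the smallest set, etc. -/
def lv {n : ℕ} (C : Finset (Finset (Fin n))) (p : Fin n) : ℕ := (C.filter (fun A => p ∉ A)).card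

/-- The `j`-th member `F_j` of the full chain `∅ = F₀ ⊂ F₁ ⊂ ⋯ ⊂ F_{k+1} = [n]` of the flag. -/
def fullChain {n : ℕ} (C : Finset (Finset (Fin n))) (j : ℕ) : Finset (Fin n) :=
  Finset.univ.filter (fun p => lv C p < j)

/-- The type of a flag: the composition `(|F₁|-|F₀|, …, |F_{k+1}|-|F_k|)` of `n`. -/
def flagType {n : ℕ} (C : Finset (Finset (Fin n))) : List ℕ :=
  (List.range (C.card + 1)).map (fun j => (fullChain C (j + 1)).card - (fullChain C j).card)

/-- The relative interior of the braid cone of a flag: coordinates are equal inside each block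
`F_{i+1} ∖ F_i` and strictly increase from earlier blocks to later blocks. -/
def relintBraidCone {n : ℕ} (C : Finset (Finset (Fin n))) : Set (Fin n → ℝ) :=
  {x | ∀ p q : Fin n, ((∀ A ∈ C, (p ∈ A ↔ q ∈ A)) → x p = x q) ∧
      ((∃ A ∈ C, p ∈ A ∧ q ∉ A) → x p < x q)}

/-- Homogeneous quasisymmetric functions in the monomial basis: finitely supported
coefficient functions on compositions (lists of positive integers). -/
abbrev QS : Type := (List ℕ) →₀ ℚ

/-- The monomial quasisymmetric function `M_α`. -/
noncomputable def Mc (l : List ℕ) : QS := Finsupp.single l 1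

/-- The principal specialization at `-1`:  `ps(M_α)(-1) = (-1)^{k(α)}`, extended linearly. -/
noncomputable def psNeg (f : QS) : ℚ := f.sum (fun l c => c * (-1) ^ l.length)

/-- The `f`-polynomial of a polytope `P ⊆ ℝⁿ`, evaluated at `t`. -/
noncomputable def fPoly {n : ℕ} (P : Set (Fin n → ℝ)) (t : ℚ) : ℚ :=
  ∑ i ∈ Finset.range n, ((Set.ncard {G : Set (Fin n → ℝ) | IsFace P G ∧ pdim G = i} : ℚ) * t ^ i)

/-- The weighted quasisymmetric enumerator `F_q(Q) = Σ_F q^{rk(F)} M_{type(F)}`, where the rank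
statistic `rk` on flags is given as an argument. -/
noncomputable def FqEnum (n : ℕ) (rk : Finset (Finset (Fin n)) → ℕ) (q : ℚ) : QS :=
  ∑ C : Finset (Finset (Fin n)), if IsFlag n C then q ^ (rk C) • Mc (flagType C) else 0

/-- A building set on the ground set `[n]`: a collection of nonempty subsets containing all
singletons and closed under unions of intersecting members. -/
def IsBuildingSet (n : ℕ) (B : Finset (Finset (Fin n))) : Prop :=
  (∀ I ∈ B, I.Nonempty) ∧ (∀ i : Fin n, {i} ∈ B) ∧
    (∀ I ∈ B, ∀ J ∈ B, (I ∩ J).Nonempty → I ∪ J ∈ B)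

/-- The face `Conv{e_i : i ∈ I}` of the standard simplex. -/
noncomputable def simplexFace {n : ℕ} (I : Finset (Fin n)) : Set (Fin n → ℝ) :=
  convexHull ℝ ((fun i => (Pi.single i 1 : Fin n → ℝ)) '' (I : Set (Fin n)))

/-- The nestohedron `P_B = Σ_{I ∈ B} Conv{e_i : i ∈ I}` (Minkowski sum). -/
noncomputable def nestoh {n : ℕ} (B : Finset (Finset (Fin n))) : Set (Fin n → ℝ) :=
  ∑ I ∈ B, simplexFace I

/-- The facet `F_I` of the nestohedron labelled by `I ∈ B ∖ {[n]}`: the face on which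
`Σ_{i ∈ I} x_i` is minimized. -/
noncomputable def facetOf {n : ℕ} (B : Finset (Finset (Fin n))) (I : Finset (Fin n)) :
    Set (Fin n → ℝ) :=
  argmaxSet (nestoh B) (fun j => if j ∈ I then (-1 : ℝ) else 0)

/-- A nested set for a connected building set `B`: a subcollection of `B ∖ {[n]}` any two of whose
members are nested or disjoint, such that no union of at least two pairwise disjoint members
belongs to `B`. -/
def IsNestedSet {n : ℕ} (B N : Finset (Finset (Fin n))) : Prop :=
  N ⊆ B.erase Finset.univ ∧
  (∀ I ∈ N, ∀ J ∈ N, I ⊆ J ∨ J ⊆ I ∨ Disjoint I J) ∧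
  (∀ D ∈ N.powerset, 2 ≤ D.card → (∀ I ∈ D, ∀ J ∈ D, I ≠ J → Disjoint I J) →
    D.sup id ∉ B)

/-- The set of roots of `I` with respect to a nested set `N`:
`I^{root} = I ∖ ⋃ {J ∈ N : J ⊊ I}`. -/
def rootsOf {n : ℕ} (N : Finset (Finset (Fin n))) (I : Finset (Fin n)) : Finset (Fin n) :=
  I \ ((N.filter (fun J => J ⊂ I)).sup id)

/-- The preorder `≼_G` on `[n]` attached to the face `G` of `P_B` with nested set `N`:
`i ≼_G j` iff `i ∈ I` and `j ∈ I^{root}` for some `I ∈ N ∪ {[n]}`. -/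
def preN {n : ℕ} (N : Finset (Finset (Fin n))) (i j : Fin n) : Prop :=
  ∃ I ∈ insert Finset.univ N, i ∈ I ∧ j ∈ rootsOf N I

/-- The face of the nestohedron `P_B` corresponding to a nested set `N`:
`G = F_{I₁} ∩ ⋯ ∩ F_{I_m}` (and `G = P_B` when `N = ∅`). -/
noncomputable def faceOfNested {n : ℕ} (B N : Finset (Finset (Fin n))) : Set (Fin n → ℝ) :=
  nestoh B ∩ ⋂ I ∈ N, facetOf B I

/-- The number of connected components of a building set: the number of its maximal members. -/
def cComp {n : ℕ} (B : Finset (Finset (Fin n))) : ℕ :=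
  (B.filter (fun I => ∀ J ∈ B, I ⊆ J → I = J)).card

/-- The minor `(B|_X)/Y` (restriction to `X` followed by contraction of `Y ⊆ X`): all nonempty
`I ⊆ X ∖ Y` such that `I ∪ S' ∈ B` for some `S' ⊆ Y`. -/
def bsMinor {n : ℕ} (B : Finset (Finset (Fin n))) (X Y : Finset (Fin n)) :
    Finset (Finset (Fin n)) :=
  (X \ Y).powerset.filter (fun I => I.Nonempty ∧ ∃ S' ∈ Y.powerset, I ∪ S' ∈ B)

/-- The rank `rk_B(L) = Σ_j rk(B|_{I_j}/I_{j-1})` of a flag `L` with respect to `B`, where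
`rk(B') = (size of the ground set of B') - c(B')`. -/
def rkB {n : ℕ} (B : Finset (Finset (Fin n))) (C : Finset (Finset (Fin n))) : ℕ :=
  ∑ j ∈ Finset.range (C.card + 1),
    ((fullChain C (j + 1)).card - (fullChain C j).card -
      cComp (bsMinor B (fullChain C (j + 1)) (fullChain C j)))

/-- The quotient building set `B/L = ⊕_j (B|_{I_j})/I_{j-1}` of a flag `L`. -/
def quotientBS {n : ℕ} (B : Finset (Finset (Fin n))) (C : Finset (Finset (Fin n))) :
    Finset (Finset (Fin n)) :=
  (Finset.range (C.card + 1)).biUnion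
    (fun j => bsMinor B (fullChain C (j + 1)) (fullChain C j))

/-!
For a flag `C`, the level function `ω = lv C` lies in the relative interior of the braid cone
of `C`, so the face of `P_B` attached to `C` is the face on which `⟨ω, ·⟩` is maximal. Maximal
faces of a Minkowski sum are the sums of the maximal faces of the summands, so this face is
`∑_{I ∈ B} Δ_{top I}`, where `top I` consists of the elements of `I` of maximal level, and its
direction is spanned by the `e_i - e_j` with `i, j` in a common `top I`. The sets `top I` of level
`j` are exactly the members of the minor `(B|_{F_{j+1}})/F_j`, a building set on the `j`-th block
of the flag, and each of them lies in a connected component of that minor. The direction is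
therefore spanned by the `e_i - e_j` with `i, j` in a common component, and since the components
of all the minors partition `[n]`, its dimension is `n` minus their number, which is `rk_B(C)`.
-/

def maximizers {α β : Type*} [Preorder β] (f : α → β) (s : Set α) : Set α :=
  {x | x ∈ s ∧ ∀ y ∈ s, f y ≤ f x}

section Maximizers

variable {α β E : Type*}

lemma maximizers_subset [Preorder β] (f : α → β) (s : Set α) : maximizers f s ⊆ s :=
  fun _ hx => hx.1

lemma maximizers_image {γ : Type*} [Preorder β] (f : α → β) (g : γ → α) (s : Set γ) :
    maximizers f (g '' s) = g '' maximizers (f ∘ g) s := by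
  ext x
  simp only [maximizers, Set.forall_mem_image]
  constructor
  · rintro ⟨⟨c, hc, rfl⟩, hmax⟩
    exact ⟨c, ⟨hc, hmax⟩, rfl⟩
  · rintro ⟨c, ⟨hc, hmax⟩, rfl⟩
    exact ⟨⟨c, hc, rfl⟩, hmax⟩

lemma Set.Finite.maximizers_nonempty [LinearOrder β] (f : α → β) {s : Set α} (hs : s.Finite)
    (hne : s.Nonempty) : (maximizers f s).Nonempty :=
  let ⟨x, hx, hmax⟩ := s.exists_max_image f hs hne
  ⟨x, hx, hmax⟩

lemma maximizers_zero [AddZeroClass E] [Preorder β] (f : E → β) :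
    maximizers f (0 : Set E) = 0 := by
  ext x
  simp +contextual [maximizers, Set.mem_zero]

lemma Set.Nonempty.finsetSum [AddCommMonoid E] {ι : Type*} {A : Finset ι} {s : ι → Set E}
    (hs : ∀ i ∈ A, (s i).Nonempty) : (∑ i ∈ A, s i).Nonempty := by
  choose! x hx using hs
  exact ⟨_, Set.finsetSum_mem_finsetSum A s x hx⟩

variable [AddCommMonoid E] [AddCommMonoid β] [LinearOrder β] [IsOrderedCancelAddMonoid β]

lemma maximizers_add (f : E →+ β) {s t : Set E} (hs : (maximizers f s).Nonempty)
    (ht : (maximizers f t).Nonempty) :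
    maximizers f (s + t) = maximizers f s + maximizers f t := by
  obtain ⟨a₀, ha₀, ha₀max⟩ := hs
  obtain ⟨b₀, hb₀, hb₀max⟩ := ht
  ext x
  simp only [maximizers, Set.mem_add]
  constructor
  · rintro ⟨⟨a, ha, b, hb, rfl⟩, hmax⟩
    have hsum : f a₀ + f b₀ ≤ f a + f b := by
      simpa using hmax _ ⟨a₀, ha₀, b₀, hb₀, rfl⟩
    have hfa : f a₀ ≤ f a :=
      le_of_add_le_add_right (hsum.trans (add_le_add le_rfl (hb₀max b hb)))
    have hfb : f b₀ ≤ f b :=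
      le_of_add_le_add_left (hsum.trans (add_le_add (ha₀max a ha) le_rfl))
    exact ⟨a, ⟨ha, fun y hy => (ha₀max y hy).trans hfa⟩, b,
      ⟨hb, fun y hy => (hb₀max y hy).trans hfb⟩, rfl⟩
  · rintro ⟨a, ⟨ha, hamax⟩, b, ⟨hb, hbmax⟩, rfl⟩
    refine ⟨⟨a, ha, b, hb, rfl⟩, ?_⟩
    rintro _ ⟨a', ha', b', hb', rfl⟩
    simpa using add_le_add (hamax a' ha') (hbmax b' hb')

lemma maximizers_sum {ι : Type*} (f : E →+ β) (A : Finset ι) (s : ι → Set E)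
    (hs : ∀ i ∈ A, (maximizers f (s i)).Nonempty) :
    maximizers f (∑ i ∈ A, s i) = ∑ i ∈ A, maximizers f (s i) := by
  classical
  induction A using Finset.induction_on with
  | empty => simp [maximizers_zero]
  | insert a A ha ih =>
    have ih := ih fun i hi => hs i (Finset.mem_insert_of_mem hi)
    rw [Finset.sum_insert ha, Finset.sum_insert ha, ← ih]
    refine maximizers_add f (hs a (Finset.mem_insert_self a A)) ?_
    rw [ih]
    exact Set.Nonempty.finsetSum fun i hi => hs i (Finset.mem_insert_of_mem hi)

end Maximizers

lemma maximizers_convexHull {E : Type*} [AddCommGroup E] [Module ℝ E] (f : E →ₗ[ℝ] ℝ)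
    (s : Finset E) :
    maximizers f (convexHull ℝ (s : Set E)) = convexHull ℝ (maximizers f s) := by
  rcases s.eq_empty_or_nonempty with rfl | hs
  · simp [maximizers]
  obtain ⟨x₀, hx₀, hx₀max⟩ := s.exists_max_image f hs
  have hle : convexHull ℝ (s : Set E) ⊆ {y | f y ≤ f x₀} :=
    convexHull_min hx₀max (convex_halfSpace_le f.isLinear _)
  apply Set.Subset.antisymm
  · rintro x ⟨hx, hxmax⟩
    obtain ⟨w, hw₀, hw₁, rfl⟩ := Finset.mem_convexHull'.1 hx
    have hterm : ∀ y ∈ s, w y * f y ≤ w y * f x₀ :=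
      fun y hy => mul_le_mul_of_nonneg_left (hx₀max y hy) (hw₀ y hy)
    have htotal : ∑ y ∈ s, w y * f x₀ ≤ ∑ y ∈ s, w y * f y := by
      simpa [← Finset.sum_mul, hw₁, map_sum] using hxmax x₀ (subset_convexHull ℝ _ hx₀)
    have heq := (Finset.sum_eq_sum_iff_of_le hterm).1
      (le_antisymm (Finset.sum_le_sum hterm) htotal)
    -- only maximizers carry positive weight
    have hsupp : ∀ y ∈ s.filter (w · ≠ 0), y ∈ maximizers f s := by
      intro y hy
      obtain ⟨hy, hwy⟩ := Finset.mem_filter.1 hy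
      have hfy : f y = f x₀ := mul_left_cancel₀ hwy (heq y hy)
      exact ⟨hy, fun z hz => hfy ▸ hx₀max z hz⟩
    refine convexHull_mono hsupp (Finset.mem_convexHull'.2 ⟨w, fun y hy => hw₀ y
      (Finset.filter_subset _ _ hy), by rwa [Finset.sum_filter_ne_zero], ?_⟩)
    exact Finset.sum_filter_of_ne fun y _ h => left_ne_zero_of_smul h
  · intro x hx
    have hge : convexHull ℝ (maximizers f s) ⊆ {y | f x₀ ≤ f y} :=
      convexHull_min (fun y hy => hy.2 x₀ hx₀) (convex_halfSpace_ge f.isLinear _)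
    exact ⟨convexHull_mono (maximizers_subset f _) hx, fun y hy => (hle hy).trans (hge hx)⟩

section TopPart

variable {α β : Type*} [Preorder β] [DecidableLE β]

def topPart (f : α → β) (I : Finset α) : Finset α :=
  I.filter fun i => ∀ j ∈ I, f j ≤ f i

lemma mem_topPart {f : α → β} {I : Finset α} {i : α} :
    i ∈ topPart f I ↔ i ∈ I ∧ ∀ j ∈ I, f j ≤ f i :=
  Finset.mem_filter

lemma coe_topPart (f : α → β) (I : Finset α) : (topPart f I : Set α) = maximizers f I := by
  ext
  simp [mem_topPart, maximizers]

end TopPart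

lemma topPart_natCast {α : Type*} (g : α → ℕ) (I : Finset α) :
    topPart (fun a => (g a : ℝ)) I = topPart g I := by
  ext
  simp [mem_topPart]

section VectorSpan

variable {k V : Type*} [Ring k] [AddCommGroup V] [Module k V]

lemma vectorSpan_add {s t : Set V} (hs : s.Nonempty) (ht : t.Nonempty) :
    vectorSpan k (s + t) = vectorSpan k s ⊔ vectorSpan k t := by
  obtain ⟨a₀, ha₀⟩ := hs
  obtain ⟨b₀, hb₀⟩ := ht
  rw [vectorSpan_eq_span_vsub_set_right k (Set.add_mem_add ha₀ hb₀),
    vectorSpan_eq_span_vsub_set_right k ha₀, vectorSpan_eq_span_vsub_set_right k hb₀,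
    ← Submodule.span_union]
  apply le_antisymm
  · rw [Submodule.span_le]
    rintro _ ⟨_, ⟨a, ha, b, hb, rfl⟩, rfl⟩
    have hsplit : a + b -ᵥ (a₀ + b₀) = (a -ᵥ a₀) + (b -ᵥ b₀) := by
      simp only [vsub_eq_sub]
      abel
    change a + b -ᵥ (a₀ + b₀) ∈ _
    rw [hsplit]
    exact add_mem (Submodule.subset_span (Or.inl ⟨a, ha, rfl⟩))
      (Submodule.subset_span (Or.inr ⟨b, hb, rfl⟩))
  · refine Submodule.span_mono ?_
    rintro _ (⟨a, ha, rfl⟩ | ⟨b, hb, rfl⟩)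
    · exact ⟨a + b₀, Set.add_mem_add ha hb₀, by simp⟩
    · exact ⟨a₀ + b, Set.add_mem_add ha₀ hb, by simp⟩

lemma vectorSpan_sum {ι : Type*} (A : Finset ι) (s : ι → Set V)
    (hs : ∀ i ∈ A, (s i).Nonempty) :
    vectorSpan k (∑ i ∈ A, s i) = A.sup fun i => vectorSpan k (s i) := by
  classical
  induction A using Finset.induction_on with
  | empty => simp [← Set.singleton_zero]
  | insert a A ha ih =>
    rw [Finset.sum_insert ha, Finset.sup_insert,
      ← ih fun i hi => hs i (Finset.mem_insert_of_mem hi)]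
    exact vectorSpan_add (hs a (Finset.mem_insert_self a A))
      (Set.Nonempty.finsetSum fun i hi => hs i (Finset.mem_insert_of_mem hi))

lemma vectorSpan_convexHull [PartialOrder k] (s : Set V) :
    vectorSpan k (convexHull k s) = vectorSpan k s := by
  rw [← direction_affineSpan, affineSpan_convexHull, direction_affineSpan]

end VectorSpan

namespace Finpartition

lemma sum_card_sub_one {α : Type*} [DecidableEq α] {s : Finset α} (P : Finpartition s) :
    ∑ M ∈ P.parts, (M.card - 1) = s.card - P.parts.card := by
  rw [Finset.sum_tsub_distrib _ fun M hM => Finset.card_pos.2 (P.nonempty_of_mem_parts hM),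
    P.sum_card_parts, Finset.card_eq_sum_ones P.parts]

variable (K : Type*) {ι : Type*} [Field K] [Fintype ι] [DecidableEq ι]
variable (P : Finpartition (Finset.univ : Finset ι))

def blockSum : (ι → K) →ₗ[K] (P.parts → K) :=
  LinearMap.pi fun M => ∑ i ∈ M.1, LinearMap.proj i

variable {K P} in
@[simp]
lemma blockSum_apply (x : ι → K) (M : P.parts) : blockSum K P x M = ∑ i ∈ M.1, x i := by
  simp [blockSum]

lemma ker_blockSum : LinearMap.ker (blockSum K P)
    = P.parts.sup fun M => vectorSpan K ((fun i => Pi.single i (1 : K)) '' (M : Set ι)) := by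
  apply le_antisymm
  · intro x hx
    have hdecomp : x = ∑ M ∈ P.parts, ∑ i ∈ M, x i • Pi.single i (1 : K) :=
      calc x = ∑ i, x i • Pi.single i (1 : K) := by ext; simp [Pi.single_apply]
        _ = ∑ i ∈ P.parts.biUnion id, x i • Pi.single i (1 : K) := by rw [P.biUnion_parts]
        _ = _ := Finset.sum_biUnion P.disjoint
    rw [hdecomp]
    refine Submodule.sum_mem _ fun M hM => ?_
    obtain ⟨r, hr⟩ := P.nonempty_of_mem_parts hM
    have hzero : ∑ i ∈ M, x i = 0 := by
      simpa using congrFun (LinearMap.mem_ker.1 hx) ⟨M, hM⟩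
    have hshift : ∑ i ∈ M, x i • Pi.single i (1 : K)
        = ∑ i ∈ M, x i • (Pi.single i 1 - Pi.single r 1) := by
      simp [smul_sub, Finset.sum_sub_distrib, ← Finset.sum_smul, hzero]
    rw [hshift]
    refine Submodule.sum_mem _ fun i hi => Submodule.smul_mem _ _ ?_
    have hle := Finset.le_sup
      (f := fun M : Finset ι => vectorSpan K ((fun i => Pi.single i (1 : K)) '' (M : Set ι))) hM
    exact hle (vsub_mem_vectorSpan K ⟨i, hi, rfl⟩ ⟨r, hr, rfl⟩)
  · refine Finset.sup_le fun M hM => ?_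
    rw [vectorSpan_def, Submodule.span_le]
    rintro _ ⟨_, ⟨i, hi, rfl⟩, _, ⟨j, hj, rfl⟩, rfl⟩
    rw [SetLike.mem_coe, LinearMap.mem_ker]
    ext N
    have hij : i ∈ N.1 ↔ j ∈ N.1 := by
      constructor <;> intro h
      · rwa [P.eq_of_mem_parts N.2 hM h hi]
      · rwa [P.eq_of_mem_parts N.2 hM h hj]
    simp [Finset.sum_sub_distrib, hij]

lemma blockSum_surjective : Function.Surjective (blockSum K P) := by
  choose r hr using fun M : P.parts => P.nonempty_of_mem_parts M.2
  intro t
  refine ⟨∑ M : P.parts, t M • Pi.single (r M) 1, funext fun N => ?_⟩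
  have hrN : ∀ M : P.parts, r M ∈ N.1 ↔ M = N := fun M =>
    ⟨fun h => Subtype.ext (P.eq_of_mem_parts M.2 N.2 (hr M) h), fun h => h ▸ hr M⟩
  simp only [blockSum_apply, Finset.sum_apply, Pi.smul_apply, smul_eq_mul]
  rw [Finset.sum_comm]
  simp [← Finset.mul_sum, hrN]

theorem finrank_sup_vectorSpan_parts :
    Module.finrank K
        ↥(P.parts.sup fun M => vectorSpan K ((fun i => Pi.single i (1 : K)) '' (M : Set ι)))
      = Fintype.card ι - P.parts.card := by
  have := (blockSum K P).finrank_range_add_finrank_ker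
  rw [LinearMap.range_eq_top.2 (blockSum_surjective K P), finrank_top, Module.finrank_pi,
    Module.finrank_fintype_fun_eq_card, Fintype.card_coe] at this
  rw [← ker_blockSum]
  omega

end Finpartition

section BuildingSetOn

variable {α : Type*} [DecidableEq α]

structure IsBuildingSetOn (X : Finset α) (F : Finset (Finset α)) : Prop where
  nonempty : ∀ I ∈ F, I.Nonempty
  subset : ∀ I ∈ F, I ⊆ X
  singleton_mem : ∀ x ∈ X, {x} ∈ F
  union_mem : ∀ I ∈ F, ∀ J ∈ F, (I ∩ J).Nonempty → I ∪ J ∈ F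

def components (F : Finset (Finset α)) : Finset (Finset α) :=
  F.filter fun I => ∀ J ∈ F, I ⊆ J → I = J

lemma mem_components {F : Finset (Finset α)} {M : Finset α} :
    M ∈ components F ↔ M ∈ F ∧ ∀ J ∈ F, M ⊆ J → M = J :=
  Finset.mem_filter

lemma exists_mem_components_superset {F : Finset (Finset α)} {J : Finset α} (hJ : J ∈ F) :
    ∃ M ∈ components F, J ⊆ M := by
  obtain ⟨M, hJM, hM, hmax⟩ := F.exists_le_maximal hJ
  exact ⟨M, mem_components.2 ⟨hM, fun K hK hMK => (hmax hK hMK).antisymm' hMK⟩, hJM⟩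

variable {X : Finset α} {F : Finset (Finset α)}

lemma IsBuildingSetOn.existsUnique_mem_components (hF : IsBuildingSetOn X F) {x : α}
    (hx : x ∈ X) : ∃! M, M ∈ components F ∧ x ∈ M := by
  obtain ⟨M, hM, hxM⟩ := exists_mem_components_superset (hF.singleton_mem x hx)
  replace hxM := hxM (Finset.mem_singleton_self x)
  refine ⟨M, ⟨hM, hxM⟩, fun M' ⟨hM', hxM'⟩ => ?_⟩
  obtain ⟨hMF, hMmax⟩ := mem_components.1 hM
  obtain ⟨hM'F, hM'max⟩ := mem_components.1 hM'
  have hunion := hF.union_mem M' hM'F M hMF ⟨x, Finset.mem_inter.2 ⟨hxM', hxM⟩⟩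
  exact (hM'max _ hunion Finset.subset_union_left).trans
    (hMmax _ hunion Finset.subset_union_right).symm

def IsBuildingSetOn.componentsPartition (hF : IsBuildingSetOn X F) : Finpartition X :=
  Finpartition.ofExistsUnique (components F)
    (fun M hM => hF.subset M (mem_components.1 hM).1)
    (fun _ hx => hF.existsUnique_mem_components hx)
    (fun h => Finset.not_nonempty_empty (hF.nonempty ∅ (mem_components.1 h).1))

end BuildingSetOn

lemma cComp_eq_card_components {n : ℕ} (F : Finset (Finset (Fin n))) :
    cComp F = (components F).card := by
  unfold cComp components
  congr

lemma mem_bsMinor {n : ℕ} {B : Finset (Finset (Fin n))} {X Y I : Finset (Fin n)} :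
    I ∈ bsMinor B X Y ↔ I ⊆ X \ Y ∧ I.Nonempty ∧ ∃ S ⊆ Y, I ∪ S ∈ B := by
  simp [bsMinor]

lemma IsBuildingSet.isBuildingSetOn_bsMinor {n : ℕ} {B : Finset (Finset (Fin n))}
    (hB : IsBuildingSet n B) (X Y : Finset (Fin n)) :
    IsBuildingSetOn (X \ Y) (bsMinor B X Y) where
  nonempty _ hI := (mem_bsMinor.1 hI).2.1
  subset _ hI := (mem_bsMinor.1 hI).1
  singleton_mem x hx := mem_bsMinor.2 ⟨Finset.singleton_subset_iff.2 hx,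
    Finset.singleton_nonempty x, ∅, Finset.empty_subset Y, by simpa using hB.2.1 x⟩
  union_mem I hI J hJ hIJ := by
    obtain ⟨hIX, hIne, S, hSY, hIS⟩ := mem_bsMinor.1 hI
    obtain ⟨hJX, -, T, hTY, hJT⟩ := mem_bsMinor.1 hJ
    refine mem_bsMinor.2 ⟨Finset.union_subset hIX hJX, hIne.mono Finset.subset_union_left,
      S ∪ T, Finset.union_subset hSY hTY, ?_⟩
    rw [Finset.union_union_union_comm]
    exact hB.2.2 _ hIS _ hJT (hIJ.mono (Finset.inter_subset_inter
      Finset.subset_union_left Finset.subset_union_left))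

section Flag

variable {n : ℕ} (C : Finset (Finset (Fin n)))

def levelSet (j : ℕ) : Finset (Fin n) := Finset.univ.filter fun p => lv C p = j

variable {C}

lemma mem_fullChain {p : Fin n} {j : ℕ} : p ∈ fullChain C j ↔ lv C p < j := by
  simp [fullChain]

lemma mem_levelSet {p : Fin n} {j : ℕ} : p ∈ levelSet C j ↔ lv C p = j := by
  simp [levelSet]

lemma lv_le_card (p : Fin n) : lv C p ≤ C.card := Finset.card_filter_le _ _

variable (C)

lemma fullChain_succ_sdiff (j : ℕ) : fullChain C (j + 1) \ fullChain C j = levelSet C j := by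
  ext p
  simp only [Finset.mem_sdiff, mem_fullChain, mem_levelSet]
  omega

lemma card_levelSet (j : ℕ) :
    (levelSet C j).card = (fullChain C (j + 1)).card - (fullChain C j).card := by
  rw [← fullChain_succ_sdiff, Finset.card_sdiff_of_subset]
  exact fun p hp => mem_fullChain.2 (Nat.lt_succ_of_lt (mem_fullChain.1 hp))

lemma supIndep_levelSet : (Finset.range (C.card + 1)).SupIndep (levelSet C) :=
  Finset.supIndep_iff_pairwiseDisjoint.2 fun _ _ _ _ hij => Finset.disjoint_left.2
    fun _ hi hj => hij ((mem_levelSet.1 hi).symm.trans (mem_levelSet.1 hj))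

lemma sup_levelSet : (Finset.range (C.card + 1)).sup (levelSet C) = Finset.univ :=
  Finset.eq_univ_of_forall fun p => Finset.mem_sup.2
    ⟨lv C p, Finset.mem_range.2 (Nat.lt_succ_of_le (lv_le_card p)), mem_levelSet.2 rfl⟩

lemma lv_mem_relintBraidCone (hC : ∀ A ∈ C, ∀ A' ∈ C, A ⊆ A' ∨ A' ⊆ A) :
    (fun p => (lv C p : ℝ)) ∈ relintBraidCone C := by
  intro p q
  constructor
  · intro hpq
    simp only [lv, Finset.filter_congr fun A hA => not_congr (hpq A hA)]
  · rintro ⟨A, hA, hpA, hqA⟩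
    have hsub : C.filter (p ∉ ·) ⊂ C.filter (q ∉ ·) := by
      refine Finset.ssubset_iff_subset_ne.2 ⟨fun A' hA' => ?_, fun heq => ?_⟩
      · obtain ⟨hA'C, hpA'⟩ := Finset.mem_filter.1 hA'
        refine Finset.mem_filter.2 ⟨hA'C, fun hqA' => ?_⟩
        rcases hC A hA A' hA'C with h | h
        · exact hpA' (h hpA)
        · exact hqA (h hqA')
      · have hA' : A ∈ C.filter (q ∉ ·) := Finset.mem_filter.2 ⟨hA, hqA⟩
        rw [← heq, Finset.mem_filter] at hA'
        exact hA'.2 hpA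
    exact Nat.cast_lt.2 (Finset.card_lt_card hsub)

variable {B : Finset (Finset (Fin n))}

lemma IsBuildingSet.isBuildingSetOn_levelSet (hB : IsBuildingSet n B) (j : ℕ) :
    IsBuildingSetOn (levelSet C j) (bsMinor B (fullChain C (j + 1)) (fullChain C j)) :=
  fullChain_succ_sdiff C j ▸ hB.isBuildingSetOn_bsMinor _ _

def IsBuildingSet.flagCells (hB : IsBuildingSet n B) :
    Finpartition (Finset.univ : Finset (Fin n)) :=
  (Finpartition.combine (fun j => (hB.isBuildingSetOn_levelSet C j).componentsPartition)
    (supIndep_levelSet C)).copy (sup_levelSet C)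

lemma IsBuildingSet.mem_flagCells (hB : IsBuildingSet n B) {M : Finset (Fin n)} :
    M ∈ (hB.flagCells C).parts ↔ ∃ j ∈ Finset.range (C.card + 1),
      M ∈ components (bsMinor B (fullChain C (j + 1)) (fullChain C j)) := by
  simp [IsBuildingSet.flagCells, Finpartition.copy, IsBuildingSetOn.componentsPartition]

lemma IsBuildingSet.rkB_eq_sub_card_flagCells (hB : IsBuildingSet n B) :
    rkB B C = n - (hB.flagCells C).parts.card := by
  have hsum := (hB.flagCells C).sum_card_sub_one
  rw [Finset.card_univ, Fintype.card_fin] at hsum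
  rw [← hsum, IsBuildingSet.flagCells, Finpartition.copy, Finpartition.sum_combine, rkB]
  refine Finset.sum_congr rfl fun j _ => ?_
  rw [Finpartition.sum_card_sub_one, card_levelSet, cComp_eq_card_components]
  rfl

variable {C}

lemma exists_topPart_lv_mem_bsMinor {I : Finset (Fin n)} (hI : I ∈ B) (hne : I.Nonempty) :
    ∃ j ∈ Finset.range (C.card + 1),
      topPart (lv C) I ∈ bsMinor B (fullChain C (j + 1)) (fullChain C j) := by
  obtain ⟨i₀, hi₀, hmax⟩ := I.exists_max_image (lv C) hne
  have hlv : ∀ i ∈ topPart (lv C) I, lv C i = lv C i₀ := fun i hi =>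
    (hmax i (mem_topPart.1 hi).1).antisymm ((mem_topPart.1 hi).2 i₀ hi₀)
  refine ⟨lv C i₀, Finset.mem_range.2 (Nat.lt_succ_of_le (lv_le_card i₀)), mem_bsMinor.2
    ⟨fun i hi => ?_, ⟨i₀, mem_topPart.2 ⟨hi₀, hmax⟩⟩, I.filter (lv C · < lv C i₀),
      fun i hi => mem_fullChain.2 (Finset.mem_filter.1 hi).2, ?_⟩⟩
  · rw [fullChain_succ_sdiff, mem_levelSet, hlv i hi]
  · convert hI using 1
    ext i
    simp only [mem_topPart, Finset.mem_union, Finset.mem_filter]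
    constructor
    · rintro (⟨hi, -⟩ | ⟨hi, -⟩) <;> exact hi
    · intro hi
      rcases (hmax i hi).lt_or_eq with hlt | heq
      · exact Or.inr ⟨hi, hlt⟩
      · exact Or.inl ⟨hi, fun j hj => heq ▸ hmax j hj⟩

lemma exists_topPart_lv_eq {j : ℕ} {M : Finset (Fin n)}
    (hM : M ∈ bsMinor B (fullChain C (j + 1)) (fullChain C j)) :
    ∃ I ∈ B, topPart (lv C) I = M := by
  obtain ⟨hMlv, ⟨m, hm⟩, S, hS, hMS⟩ := mem_bsMinor.1 hM
  rw [fullChain_succ_sdiff] at hMlv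
  have hlvM : ∀ i ∈ M, lv C i = j := fun i hi => mem_levelSet.1 (hMlv hi)
  have hlvS : ∀ i ∈ S, lv C i < j := fun i hi => mem_fullChain.1 (hS hi)
  refine ⟨M ∪ S, hMS, Finset.ext fun i => ?_⟩
  simp only [mem_topPart, Finset.mem_union]
  constructor
  · rintro ⟨hi | hi, hmax⟩
    · exact hi
    · exact absurd (hmax m (Or.inl hm)) (by rw [hlvM m hm]; exact not_le.2 (hlvS i hi))
  · intro hi
    refine ⟨Or.inl hi, fun k hk => ?_⟩
    rw [hlvM i hi]
    rcases hk with hk | hk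
    · exact (hlvM k hk).le
    · exact (hlvS k hk).le

end Flag

section Nestohedron

variable {n : ℕ}

lemma simplexFace_mono {I J : Finset (Fin n)} (h : I ⊆ J) : simplexFace I ⊆ simplexFace J :=
  convexHull_mono (Set.image_mono (Finset.coe_subset.2 h))

lemma vectorSpan_simplexFace (I : Finset (Fin n)) :
    vectorSpan ℝ (simplexFace I)
      = vectorSpan ℝ ((fun i => Pi.single i (1 : ℝ)) '' (I : Set (Fin n))) :=
  vectorSpan_convexHull _

lemma maximizers_simplexFace (ω : Fin n → ℝ) (I : Finset (Fin n)) :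
    maximizers (dotProductBilin ℝ ℝ ω) (simplexFace I) = simplexFace (topPart ω I) := by
  have hω : dotProductBilin ℝ ℝ ω ∘ (fun i => Pi.single i (1 : ℝ)) = ω :=
    funext fun i => by simp [dotProductBilin]
  rw [simplexFace, ← Finset.coe_image, maximizers_convexHull, Finset.coe_image, maximizers_image,
    hω, simplexFace, coe_topPart]

lemma simplexFace_topPart_nonempty (ω : Fin n → ℝ) {I : Finset (Fin n)} (hI : I.Nonempty) :
    (simplexFace (topPart ω I)).Nonempty := by
  rw [simplexFace, convexHull_nonempty_iff, Set.image_nonempty, coe_topPart]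
  exact Set.Finite.maximizers_nonempty ω I.finite_toSet hI

lemma argmaxSet_nestoh {B : Finset (Finset (Fin n))} (hB : ∀ I ∈ B, I.Nonempty)
    (ω : Fin n → ℝ) : argmaxSet (nestoh B) ω = ∑ I ∈ B, simplexFace (topPart ω I) := by
  change maximizers (dotProductBilin ℝ ℝ ω).toAddMonoidHom (∑ I ∈ B, simplexFace I) = _
  rw [maximizers_sum]
  · exact Finset.sum_congr rfl fun I _ => maximizers_simplexFace ω I
  · intro I hI
    exact (maximizers_simplexFace ω I).symm ▸ simplexFace_topPart_nonempty ω (hB I hI)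

variable {B : Finset (Finset (Fin n))}

lemma IsBuildingSet.sup_vectorSpan_topPart_lv (hB : IsBuildingSet n B)
    (C : Finset (Finset (Fin n))) :
    (B.sup fun I => vectorSpan ℝ (simplexFace (topPart (lv C) I)))
      = (hB.flagCells C).parts.sup fun M => vectorSpan ℝ (simplexFace M) := by
  apply le_antisymm
  · refine Finset.sup_le fun I hI => ?_
    obtain ⟨j, hj, htop⟩ := exists_topPart_lv_mem_bsMinor (C := C) hI (hB.1 I hI)
    obtain ⟨M, hM, hsub⟩ := exists_mem_components_superset htop
    exact (vectorSpan_mono ℝ (simplexFace_mono hsub)).trans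
      (Finset.le_sup (f := fun M => vectorSpan ℝ (simplexFace M))
        ((hB.mem_flagCells C).2 ⟨j, hj, hM⟩))
  · refine Finset.sup_le fun M hM => ?_
    obtain ⟨j, -, hMj⟩ := (hB.mem_flagCells C).1 hM
    obtain ⟨I, hI, rfl⟩ := exists_topPart_lv_eq (mem_components.1 hMj).1
    exact Finset.le_sup (f := fun I => vectorSpan ℝ (simplexFace (topPart (lv C) I))) hI

theorem IsBuildingSet.pdim_argmaxSet_nestoh_lv (hB : IsBuildingSet n B)
    (C : Finset (Finset (Fin n))) :
    pdim (argmaxSet (nestoh B) fun p => (lv C p : ℝ)) = rkB B C := by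
  rw [pdim, argmaxSet_nestoh hB.1,
    vectorSpan_sum _ _ fun I hI => simplexFace_topPart_nonempty _ (hB.1 I hI),
    Finset.sup_congr rfl fun I _ => by rw [topPart_natCast], hB.sup_vectorSpan_topPart_lv C,
    Finset.sup_congr rfl fun M _ => vectorSpan_simplexFace M,
    Finpartition.finrank_sup_vectorSpan_parts, Fintype.card_fin, hB.rkB_eq_sub_card_flagCells]

end Nestohedron

theorem FqEnum_nestohedron_eq_Psi_general (n : ℕ)
    (B : Finset (Finset (Fin n))) (hB : IsBuildingSet n B)
    (faceOf : Finset (Finset (Fin n)) → Set (Fin n → ℝ))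
    (hface : ∀ C : Finset (Finset (Fin n)), IsFlag n C →
      IsFace (nestoh B) (faceOf C) ∧
        ∀ ω ∈ relintBraidCone C, argmaxSet (nestoh B) ω = faceOf C)
    (q : ℚ) :
    FqEnum n (fun C => pdim (faceOf C)) q
      = ∑ C : Finset (Finset (Fin n)),
          (if IsFlag n C then q ^ (rkB B C) • Mc (flagType C) else 0) := by
  refine Finset.sum_congr rfl fun C _ => ?_
  split_ifs with hC
  · dsimp only
    rw [← (hface C hC).2 _ (lv_mem_relintBraidCone C hC.2), hB.pdim_argmaxSet_nestoh_lv]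
  · rfl

/-- For a building set `B` on `[n]`, the weighted quasisymmetric enumerator of
the nestohedron `P_B` coincides with the value of the universal morphism `Ψ_q` of combinatorial
Hopf algebras on `[B]`:  `F_q(P_B) = Ψ_q([B]) = Σ_L q^{rk_B(L)} M_{type(L)}`, the sum over all
flags `L` of subsets of `[n]`.  Here `F_q(P_B) = Σ_L q^{dim π_{P_B}(L)} M_{type(L)}` with
`π_{P_B}(L) = faceOf L` the face of `P_B` attached to the flag `L`. -/
theorem FqEnum_nestohedron_eq_Psi (n : ℕ) (hn : 0 < n)
    (B : Finset (Finset (Fin n))) (hB : IsBuildingSet n B)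
    (faceOf : Finset (Finset (Fin n)) → Set (Fin n → ℝ))
    (hface : ∀ C : Finset (Finset (Fin n)), IsFlag n C →
      IsFace (nestoh B) (faceOf C) ∧
        ∀ ω ∈ relintBraidCone C, argmaxSet (nestoh B) ω = faceOf C)
    (q : ℚ) :
    FqEnum n (fun C => pdim (faceOf C)) q
      = ∑ C : Finset (Finset (Fin n)),
          (if IsFlag n C then q ^ (rkB B C) • Mc (flagType C) else 0) :=
  FqEnum_nestohedron_eq_Psi_general n B hB faceOf hface q
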